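/- In the ring R = k[a,b,c,d]/((a,b) ∩ (c,d)) (k a field), with y_1 = a^2, y_2 = b^2: the limit closure satisfies (y_1,y_2)^lim = (a^2, b^2, c, d), and y_1, y_2 is not a system of parameters, yet (y_1,y_2)^lim : ab ⊆ (x_1,x_2)^lim = m where x_1 = a+c, x_2 = b+d; thus the multiplication-by-(ab) map R/(x)^lim → R/(y)^lim is injective even though y is not a system of parameters. -/

import Mathlib

/-!
In `R` we have `ac = ad = bc = bd = 0`, so `y₁y₂·c = y₁y₂·d = 0`, while `x₁x₂ = ab + cd` and
`x₁² = a² + c²`, `x₂² = b² + d²` give `x₁x₂·a = b·x₁²`, `x₁x₂·b = a·x₂²`, `x₁x₂·c = d·x₁²`,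
`x₁x₂·d = c·x₂²`. With `t = 2` this yields `(a², b², c, d) ⊆ (y)^lim` and `m ⊆ (x)^lim`.

Everything else is read off in `k[a,b,c,d]`: clearing denominators, `r ∈ J·R` means `s·r ∈ J + I`
for some `s` with nonzero constant term, where `I = (a,b) ∩ (c,d)`. As `I ⊆ (a,b)` and
`I ⊆ (c,d)`, the ideals involved sit inside monomial ideals, where membership is a condition on
exponents: `(a²b²)^(t-1)·h ∈ (a^2t, b^2t, c, d)` forces `h ∈ (a², b², c, d)`, while `s·ab` and
`s·cⁿ` lie outside `(a², b², c, d)` and `(a, b)`. For `x`, the substitution `c, d ↦ 0` kills `I` and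
turns `s·(x₁x₂)^(t-1) ∈ (x₁^t, x₂^t)` into `s(a,b,0,0)·(ab)^(t-1) ∈ (a^t, b^t)`, which is absurd,
so no unit lies in `(x)^lim`. Finally, if `ab·r ∈ (y)^lim = (a², b², c, d)` with `r` a unit, then
`ab ∈ (a², b², c, d)`; hence `r ∈ m = (x)^lim`.
-/

open MvPolynomial

/-- The defining ideal `(a,b) ∩ (c,d)` of `k[a,b,c,d]`. -/
noncomputable def defIdeal (k : Type) [Field k] : Ideal (MvPolynomial (Fin 4) k) :=
  Ideal.span {X 0, X 1} ⊓ Ideal.span {X 2, X 3}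

/-- The ring `k[a,b,c,d]/((a,b) ∩ (c,d))`. -/
abbrev QR (k : Type) [Field k] : Type :=
  MvPolynomial (Fin 4) k ⧸ defIdeal k

/-- The irrelevant maximal ideal `(a,b,c,d)` of `k[a,b,c,d]/((a,b) ∩ (c,d))`. -/
noncomputable def mQ (k : Type) [Field k] : Ideal (QR k) :=
  Ideal.span {Ideal.Quotient.mk (defIdeal k) (X 0), Ideal.Quotient.mk (defIdeal k) (X 1),
    Ideal.Quotient.mk (defIdeal k) (X 2), Ideal.Quotient.mk (defIdeal k) (X 3)}

/-- The image of a polynomial in the localization of `QR k` at `mQ k`. -/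
noncomputable def toLoc (k : Type) [Field k] [hp : (mQ k).IsPrime]
    (f : MvPolynomial (Fin 4) k) : Localization.AtPrime (mQ k) :=
  algebraMap (QR k) (Localization.AtPrime (mQ k)) (Ideal.Quotient.mk (defIdeal k) f)

/-- The limit closure of a pair of elements. -/
def limClosure2 {R : Type} [CommRing R] (z₁ z₂ : R) : Set R :=
  {r : R | ∃ t : ℕ, 1 ≤ t ∧ (z₁ * z₂) ^ (t - 1) * r ∈ Ideal.span {z₁ ^ t, z₂ ^ t}}

namespace MvPolynomial

variable {σ τ R : Type*} [CommSemiring R]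

theorem mul_monomial_mem_span_monomial_iff {g : MvPolynomial σ R} {μ : σ →₀ ℕ}
    {s : Set (σ →₀ ℕ)} :
    g * monomial μ 1 ∈ Ideal.span ((fun s => monomial s (1 : R)) '' s) ↔
      ∀ m ∈ g.support, ∃ si ∈ s, si ≤ m + μ := by
  rw [mem_ideal_span_monomial_image]
  constructor
  · intro h m hm
    exact h (m + μ) (by rwa [mem_support_iff, coeff_mul_monomial, mul_one, ← mem_support_iff])
  · intro h xi hxi
    rw [mem_support_iff, coeff_mul_monomial'] at hxi
    split_ifs at hxi with hμ
    · rw [mul_one, ← mem_support_iff] at hxi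
      simpa only [tsub_add_cancel_of_le hμ] using h _ hxi
    · exact absurd rfl hxi

theorem exists_le_of_mul_monomial_mem_span_monomial {g : MvPolynomial σ R} {μ : σ →₀ ℕ}
    {s : Set (σ →₀ ℕ)} (hg : constantCoeff g ≠ 0)
    (h : g * monomial μ 1 ∈ Ideal.span ((fun s => monomial s (1 : R)) '' s)) :
    ∃ si ∈ s, si ≤ μ := by
  simpa using mul_monomial_mem_span_monomial_iff.1 h 0 (by rwa [mem_support_iff, ← constantCoeff_eq])

theorem mem_idealOfVars_iff {p : MvPolynomial σ R} :
    p ∈ idealOfVars σ R ↔ constantCoeff p = 0 := by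
  simpa [constantCoeff_eq, Finsupp.degree_eq_zero_iff] using mem_pow_idealOfVars_iff' 1 p

theorem constantCoeff_aeval {f : σ → MvPolynomial τ R} (hf : ∀ i, constantCoeff (f i) = 0)
    (p : MvPolynomial σ R) : constantCoeff (aeval f p) = constantCoeff p := by
  suffices (constantCoeff : MvPolynomial τ R →+* R).comp (aeval f).toRingHom = constantCoeff from
    RingHom.congr_fun this p
  ext <;> simp [hf]

end MvPolynomial

section limClosure2

variable {R : Type} [CommRing R] {z₁ z₂ : R}

theorem mul_mem_limClosure2 (a : R) {r : R} (hr : r ∈ limClosure2 z₁ z₂) :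
    a * r ∈ limClosure2 z₁ z₂ := by
  obtain ⟨t, ht, h⟩ := hr
  exact ⟨t, ht, by simpa only [mul_left_comm] using Ideal.mul_mem_left _ a h⟩

theorem mem_limClosure2_of_mem_span {G : Set R}
    (hG : ∀ g ∈ G, z₁ * z₂ * g ∈ Ideal.span {z₁ ^ 2, z₂ ^ 2}) {r : R} (hr : r ∈ Ideal.span G) :
    r ∈ limClosure2 z₁ z₂ := by
  refine ⟨2, one_le_two, ?_⟩
  suffices Ideal.span G ≤ (Ideal.span {z₁ ^ 2, z₂ ^ 2}).colon (Ideal.span {z₁ * z₂}) by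
    simpa [Submodule.mem_colon_span_singleton, mul_comm] using this hr
  exact Ideal.span_le.2 fun g hg => by
    simpa [Submodule.mem_colon_span_singleton, mul_comm] using hG g hg

end limClosure2

section Polynomial

variable (k : Type) [Field k]

local notation "S" => MvPolynomial (Fin 4) k

theorem defIdeal_le_idealOfVars : defIdeal k ≤ idealOfVars (Fin 4) k :=
  inf_le_left.trans <| Ideal.span_mono <| by simp [Set.insert_subset_iff]

theorem mQ_eq_map_idealOfVars : mQ k = (idealOfVars (Fin 4) k).map (Ideal.Quotient.mk _) := by
  rw [idealOfVars, Ideal.map_span, ← Set.range_comp, mQ]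
  congr 1
  ext
  simp [Fin.exists_fin_succ, eq_comm]

theorem mk_mem_mQ_iff (p : S) : Ideal.Quotient.mk _ p ∈ mQ k ↔ constantCoeff p = 0 := by
  rw [mQ_eq_map_idealOfVars, Ideal.mem_quotient_iff_mem (defIdeal_le_idealOfVars k),
    mem_idealOfVars_iff]

theorem mem_span_of_mul_sq_mul_sq_pow_mem {t : ℕ} {h : S}
    (hh : h * (X 0 ^ 2 * X 1 ^ 2) ^ (t - 1) ∈
      Ideal.span {(X 0 ^ 2) ^ t, (X 1 ^ 2) ^ t} ⊔ defIdeal k) (ht : 1 ≤ t) :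
    h ∈ Ideal.span {X 0 ^ 2, X 1 ^ 2, X 2, X 3} := by
  have hle : Ideal.span {(X 0 ^ 2) ^ t, (X 1 ^ 2) ^ t} ⊔ defIdeal k ≤
      Ideal.span ((monomial · (1 : k)) '' {Finsupp.single 0 (2 * t), Finsupp.single 1 (2 * t),
        Finsupp.single 2 1, Finsupp.single 3 1}) := by
    simp only [Set.image_insert_eq, Set.image_singleton, ← X_pow_eq_monomial, pow_one, ← pow_mul]
    refine sup_le (Ideal.span_mono ?_) (inf_le_right.trans (Ideal.span_mono ?_)) <;>
      simp [Set.insert_subset_iff]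
  have hmon : (X 0 ^ 2 * X 1 ^ 2 : S) ^ (t - 1) =
      monomial (Finsupp.single 0 (2 * (t - 1)) + Finsupp.single 1 (2 * (t - 1))) 1 := by
    rw [mul_pow, ← pow_mul, ← pow_mul, X_pow_eq_monomial, X_pow_eq_monomial, monomial_mul, one_mul]
  have key := mul_monomial_mem_span_monomial_iff.1 (hmon ▸ hle hh)
  have hspan : ({X 0 ^ 2, X 1 ^ 2, X 2, X 3} : Set S) = (monomial · 1) '' {Finsupp.single 0 2,
      Finsupp.single 1 2, Finsupp.single 2 1, Finsupp.single 3 1} := by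
    simp only [Set.image_insert_eq, Set.image_singleton, ← X_pow_eq_monomial, pow_one]
  rw [hspan, mem_ideal_span_monomial_image]
  intro m hm
  have := key m hm
  simp only [Set.mem_insert_iff, Set.mem_singleton_iff, exists_eq_or_imp, exists_eq_left,
    Finsupp.single_le_iff, Finsupp.add_apply, Finsupp.single_apply, Fin.reduceEq, ↓reduceIte,
    add_zero, zero_add] at this ⊢
  omega

theorem mul_X_pow_notMem_span_sq_sup {s : S} (hs : constantCoeff s ≠ 0) (n : ℕ) :
    s * X 2 ^ n ∉ Ideal.span {X 0 ^ 2, X 1 ^ 2} ⊔ defIdeal k := by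
  have hle : Ideal.span {X 0 ^ 2, X 1 ^ 2} ⊔ defIdeal k ≤
      Ideal.span ((monomial · (1 : k)) '' {Finsupp.single 0 1, Finsupp.single 1 1}) := by
    simp only [Set.image_insert_eq, Set.image_singleton, ← X_pow_eq_monomial, pow_one]
    refine sup_le (Ideal.span_le.2 ?_) inf_le_left
    simp only [Set.insert_subset_iff, Set.singleton_subset_iff, SetLike.mem_coe]
    exact ⟨Ideal.pow_mem_of_mem _ (Ideal.subset_span (by simp)) 2 two_pos,
      Ideal.pow_mem_of_mem _ (Ideal.subset_span (by simp)) 2 two_pos⟩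
  intro h
  have h' := hle h
  rw [X_pow_eq_monomial] at h'
  obtain ⟨si, hsi, hsi_le⟩ := exists_le_of_mul_monomial_mem_span_monomial hs h'
  simp only [Set.mem_insert_iff, Set.mem_singleton_iff] at hsi
  rcases hsi with rfl | rfl <;> simp [Finsupp.single_le_iff] at hsi_le

theorem mul_X_mul_X_notMem_span_sup {s : S} (hs : constantCoeff s ≠ 0) :
    s * (X 0 * X 1) ∉ Ideal.span {X 0 ^ 2, X 1 ^ 2, X 2, X 3} ⊔ defIdeal k := by
  have hle : Ideal.span {X 0 ^ 2, X 1 ^ 2, X 2, X 3} ⊔ defIdeal k ≤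
      Ideal.span ((monomial · (1 : k)) '' {Finsupp.single 0 2, Finsupp.single 1 2,
        Finsupp.single 2 1, Finsupp.single 3 1}) := by
    simp only [Set.image_insert_eq, Set.image_singleton, ← X_pow_eq_monomial, pow_one]
    exact sup_le le_rfl (inf_le_right.trans (Ideal.span_mono (by simp [Set.insert_subset_iff])))
  intro h
  rw [← pow_one (X 0), ← pow_one (X 1), X_pow_eq_monomial, X_pow_eq_monomial, monomial_mul,
    one_mul] at h
  obtain ⟨si, hsi, hsi_le⟩ := exists_le_of_mul_monomial_mem_span_monomial hs (hle h)
  simp only [Set.mem_insert_iff, Set.mem_singleton_iff] at hsi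
  rcases hsi with rfl | rfl | rfl | rfl <;> simp [Finsupp.single_le_iff] at hsi_le

theorem mul_add_mul_add_pow_notMem_span_pow_sup {s : S} (hs : constantCoeff s ≠ 0) {t : ℕ} (ht : 1 ≤ t) :
    s * ((X 0 + X 2) * (X 1 + X 3)) ^ (t - 1) ∉
      Ideal.span {(X 0 + X 2) ^ t, (X 1 + X 3) ^ t} ⊔ defIdeal k := by
  let φ : S →ₐ[k] S := aeval ![X 0, X 1, 0, 0]
  have hle : Ideal.span {(X 0 + X 2) ^ t, (X 1 + X 3) ^ t} ⊔ defIdeal k ≤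
      (Ideal.span ((monomial · (1 : k)) '' {Finsupp.single 0 t, Finsupp.single 1 t})).comap φ := by
    simp only [Set.image_insert_eq, Set.image_singleton, ← X_pow_eq_monomial]
    refine sup_le (Ideal.span_le.2 ?_) (inf_le_right.trans (Ideal.span_le.2 ?_))
    · simp only [Set.insert_subset_iff, Set.singleton_subset_iff, SetLike.mem_coe,
        Ideal.mem_comap]
      simpa [φ] using ⟨Ideal.subset_span (by simp), Ideal.subset_span (by simp)⟩
    · simp [Set.insert_subset_iff, φ]
  have hφs : constantCoeff (φ s) ≠ 0 := by
    rwa [constantCoeff_aeval (fun i => by fin_cases i <;> simp)]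
  have hmon : φ (((X 0 + X 2) * (X 1 + X 3)) ^ (t - 1)) =
      monomial (Finsupp.single 0 (t - 1) + Finsupp.single 1 (t - 1)) 1 := by
    simp [φ, mul_pow, X_pow_eq_monomial, monomial_mul]
  intro h
  have h' := Ideal.mem_comap.1 (hle h)
  rw [map_mul, hmon] at h'
  obtain ⟨si, hsi, hsi_le⟩ := exists_le_of_mul_monomial_mem_span_monomial hφs h'
  simp only [Set.mem_insert_iff, Set.mem_singleton_iff] at hsi
  rcases hsi with rfl | rfl <;> simp [Finsupp.single_le_iff] at hsi_le <;> omega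

end Polynomial

section Localization

variable (k : Type) [Field k] [(mQ k).IsPrime]

local notation "S" => MvPolynomial (Fin 4) k
local notation "Rₘ" => Localization.AtPrime (mQ k)

noncomputable def locMap : S →+* Rₘ :=
  (algebraMap (QR k) Rₘ).comp (Ideal.Quotient.mk (defIdeal k))

theorem toLoc_eq_locMap (f : S) : toLoc k f = locMap k f := rfl

variable {k}

theorem locMap_X_mul_X_eq_zero {i j : Fin 4} (hi : i = 0 ∨ i = 1) (hj : j = 2 ∨ j = 3) :
    locMap k (X i) * locMap k (X j) = 0 := by
  rw [← map_mul, locMap, RingHom.comp_apply, Ideal.Quotient.eq_zero_iff_mem.2, map_zero]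
  exact Ideal.mem_inf.2
    ⟨Ideal.mul_mem_right _ _ (Ideal.subset_span (by rcases hi with rfl | rfl <;> simp)),
      Ideal.mul_mem_left _ _ (Ideal.subset_span (by rcases hj with rfl | rfl <;> simp))⟩

theorem isUnit_locMap_iff {f : S} : IsUnit (locMap k f) ↔ constantCoeff f ≠ 0 :=
  (IsLocalization.AtPrime.isUnit_to_map_iff _ (mQ k) _).trans (mk_mem_mQ_iff k f).not

theorem locMap_mem_maximalIdeal_iff {f : S} :
    locMap k f ∈ IsLocalRing.maximalIdeal Rₘ ↔ constantCoeff f = 0 :=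
  (IsLocalization.AtPrime.to_map_mem_maximal_iff _ (mQ k) _).trans (mk_mem_mQ_iff k f)

theorem maximalIdeal_eq_map_idealOfVars :
    IsLocalRing.maximalIdeal Rₘ = (idealOfVars (Fin 4) k).map (locMap k) := by
  rw [← Localization.AtPrime.map_eq_maximalIdeal, locMap, ← Ideal.map_map,
    ← mQ_eq_map_idealOfVars]

theorem exists_mul_mem_sup_of_locMap_mem {f : S} {J : Ideal S}
    (h : locMap k f ∈ J.map (locMap k)) :
    ∃ s, constantCoeff s ≠ 0 ∧ s * f ∈ J ⊔ defIdeal k := by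
  rw [locMap, ← Ideal.map_map, RingHom.comp_apply,
    IsLocalization.algebraMap_mem_map_algebraMap_iff (mQ k).primeCompl] at h
  obtain ⟨m, hm, hmf⟩ := h
  obtain ⟨s, rfl⟩ := Ideal.Quotient.mk_surjective m
  exact ⟨s, (mk_mem_mQ_iff k s).not.1 hm, Ideal.mem_quotient_iff_mem_sup.1 (by rwa [map_mul])⟩

theorem exists_locMap_mul_eq (r : Rₘ) :
    ∃ q σ : S, constantCoeff σ ≠ 0 ∧ r * locMap k σ = locMap k q := by
  obtain ⟨⟨q, σ⟩, h⟩ := IsLocalization.surj (mQ k).primeCompl r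
  obtain ⟨q, rfl⟩ := Ideal.Quotient.mk_surjective q
  obtain ⟨σ', hσ'⟩ := Ideal.Quotient.mk_surjective (σ : QR k)
  refine ⟨q, σ', fun h0 => σ.2 (hσ' ▸ (mk_mem_mQ_iff k σ').2 h0), ?_⟩
  rw [locMap, RingHom.comp_apply, hσ']
  exact h

theorem subset_of_forall_locMap_mem {L : Set Rₘ} {K : Ideal Rₘ}
    (hL : ∀ a, ∀ r ∈ L, a * r ∈ L) (h : ∀ q, locMap k q ∈ L → locMap k q ∈ K) :
    L ⊆ K := by
  intro r hr
  obtain ⟨q, σ, hσ, hrq⟩ := exists_locMap_mul_eq r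
  have hq := h q (hrq ▸ mul_comm (locMap k σ) r ▸ hL _ r hr)
  rwa [← hrq, Ideal.mul_unit_mem_iff_mem _ (isUnit_locMap_iff.2 hσ)] at hq

-- Instance search does not find this (needed by `linear_combination`) through `MvPolynomial ⧸ I`.
local instance : IsRightCancelAdd Rₘ :=
  ⟨(AddRightCancelSemigroup.toIsRightCancelAdd (G := Rₘ)).add_right_cancel⟩

theorem limClosure2_locMap_sq :
    limClosure2 (locMap k (X 0 ^ 2)) (locMap k (X 1 ^ 2)) =
      Ideal.span {locMap k (X 0 ^ 2), locMap k (X 1 ^ 2), locMap k (X 2), locMap k (X 3)} := by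
  apply subset_antisymm
  · refine subset_of_forall_locMap_mem (fun a _ => mul_mem_limClosure2 a) fun q ⟨t, ht, hq⟩ => ?_
    have hq' : locMap k (q * (X 0 ^ 2 * X 1 ^ 2) ^ (t - 1)) ∈
        (Ideal.span {(X 0 ^ 2) ^ t, (X 1 ^ 2) ^ t}).map (locMap k) := by
      simpa only [Ideal.map_span, Set.image_pair, map_mul, map_pow, mul_comm (locMap k q)] using hq
    obtain ⟨s, hs, hsq⟩ := exists_mul_mem_sup_of_locMap_mem hq'
    rw [← mul_assoc] at hsq
    have hmem := Ideal.mem_map_of_mem (locMap k) (mem_span_of_mul_sq_mul_sq_pow_mem k hsq ht)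
    rwa [map_mul, Ideal.unit_mul_mem_iff_mem _ (isUnit_locMap_iff.2 hs), Ideal.map_span,
      Set.image_insert_eq, Set.image_insert_eq, Set.image_pair] at hmem
  · intro r hr
    refine mem_limClosure2_of_mem_span (fun g hg => ?_) hr
    simp only [Set.mem_insert_iff, Set.mem_singleton_iff, map_pow] at hg ⊢
    set a := locMap k (X 0)
    set b := locMap k (X 1)
    have hac : a * locMap k (X 2) = 0 := locMap_X_mul_X_eq_zero (.inl rfl) (.inl rfl)
    have had : a * locMap k (X 3) = 0 := locMap_X_mul_X_eq_zero (.inl rfl) (.inr rfl)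
    rw [Ideal.mem_span_pair]
    rcases hg with rfl | rfl | rfl | rfl
    · exact ⟨b ^ 2, 0, by ring⟩
    · exact ⟨0, a ^ 2, by ring⟩
    · exact ⟨0, 0, by linear_combination -(a * b ^ 2) * hac⟩
    · exact ⟨0, 0, by linear_combination -(a * b ^ 2) * had⟩

theorem radical_span_locMap_sq_ne_maximalIdeal :
    (Ideal.span {locMap k (X 0 ^ 2), locMap k (X 1 ^ 2)}).radical ≠
      IsLocalRing.maximalIdeal Rₘ := by
  intro h
  have hc : locMap k (X 2) ∈ IsLocalRing.maximalIdeal Rₘ :=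
    locMap_mem_maximalIdeal_iff.2 (by simp)
  obtain ⟨n, hn⟩ := Ideal.mem_radical_iff.1 (h ▸ hc)
  rw [← map_pow, ← Set.image_pair, ← Ideal.map_span] at hn
  obtain ⟨s, hs, hsn⟩ := exists_mul_mem_sup_of_locMap_mem hn
  exact mul_X_pow_notMem_span_sq_sup k hs n hsn

theorem limClosure2_locMap_add :
    limClosure2 (locMap k (X 0 + X 2)) (locMap k (X 1 + X 3)) = IsLocalRing.maximalIdeal Rₘ := by
  apply subset_antisymm
  · intro r hr
    by_contra hrm
    have hu := IsLocalRing.notMem_maximalIdeal.1 hrm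
    obtain ⟨t, ht, h⟩ := mul_mem_limClosure2 ((hu.unit⁻¹ : Rₘˣ) : Rₘ) hr
    rw [hu.val_inv_mul, mul_one, ← map_mul, ← map_pow, ← map_pow, ← map_pow, ← Set.image_pair,
      ← Ideal.map_span] at h
    obtain ⟨s, hs, hsf⟩ := exists_mul_mem_sup_of_locMap_mem h
    exact mul_add_mul_add_pow_notMem_span_pow_sup k hs ht hsf
  · intro r hr
    rw [SetLike.mem_coe, maximalIdeal_eq_map_idealOfVars, idealOfVars, Ideal.map_span] at hr
    refine mem_limClosure2_of_mem_span (fun g hg => ?_) hr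
    obtain ⟨_, ⟨i, rfl⟩, rfl⟩ := hg
    set a := locMap k (X 0)
    set b := locMap k (X 1)
    set c := locMap k (X 2)
    set d := locMap k (X 3)
    have hac : a * c = 0 := locMap_X_mul_X_eq_zero (.inl rfl) (.inl rfl)
    have had : a * d = 0 := locMap_X_mul_X_eq_zero (.inl rfl) (.inr rfl)
    have hbc : b * c = 0 := locMap_X_mul_X_eq_zero (.inr rfl) (.inl rfl)
    have hbd : b * d = 0 := locMap_X_mul_X_eq_zero (.inr rfl) (.inr rfl)
    rw [Ideal.mem_span_pair]
    simp only [map_add]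
    fin_cases i <;> simp only [Fin.reduceFinMk]
    · exact ⟨b, 0, by linear_combination -(a * had + (d - b) * hac - c * hbc)⟩
    · exact ⟨0, a, by linear_combination -(-a * hbd + (b + d) * hbc - d * had)⟩
    · exact ⟨d, 0, by linear_combination -(b * hac - d * hac + c * hbc - a * had)⟩
    · exact ⟨0, c, by linear_combination -(a * hbd + d * had - (b + d) * hbc)⟩

theorem mem_maximalIdeal_of_locMap_mul_mem_limClosure2 {r : Rₘ}
    (h : locMap k (X 0 * X 1) * r ∈ limClosure2 (locMap k (X 0 ^ 2)) (locMap k (X 1 ^ 2))) :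
    r ∈ IsLocalRing.maximalIdeal Rₘ := by
  rw [limClosure2_locMap_sq, SetLike.mem_coe] at h
  by_contra hr
  rw [Ideal.mul_unit_mem_iff_mem _ (IsLocalRing.notMem_maximalIdeal.1 hr), ← Set.image_pair,
    ← Set.image_insert_eq, ← Set.image_insert_eq, ← Ideal.map_span] at h
  obtain ⟨s, hs, hsf⟩ := exists_mul_mem_sup_of_locMap_mem h
  exact mul_X_mul_X_notMem_span_sup k hs hsf

end Localization

/-- in `R = (k[a,b,c,d]/((a,b) ∩ (c,d)))` localized at
`m = (a,b,c,d)`, with `y₁ = a²`, `y₂ = b²`, `x₁ = a + c`, `x₂ = b + d`: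
`(y₁,y₂)^lim = (a², b², c, d)`; `y₁, y₂` is not a system of parameters; and yet
`(y₁,y₂)^lim : ab ⊆ (x₁,x₂)^lim = m`, so the multiplication-by-`ab` map
`R/(x)^lim → R/(y)^lim` is injective although `y` is not a system of
parameters. -/
theorem stmt17 (k : Type) [Field k] [hp : (mQ k).IsPrime] :
    -- `(y₁,y₂)^lim = (a², b², c, d)`
    (∀ r : Localization.AtPrime (mQ k),
      r ∈ limClosure2 (toLoc k (X 0 ^ 2)) (toLoc k (X 1 ^ 2)) ↔
        r ∈ Ideal.span {toLoc k (X 0 ^ 2), toLoc k (X 1 ^ 2),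
          toLoc k (X 2), toLoc k (X 3)}) ∧
    -- `y₁, y₂` is not a system of parameters
    ¬ (Ideal.span {toLoc k (X 0 ^ 2), toLoc k (X 1 ^ 2)}).radical =
        IsLocalRing.maximalIdeal (Localization.AtPrime (mQ k)) ∧
    -- `(x₁,x₂)^lim = m`
    (∀ r : Localization.AtPrime (mQ k),
      r ∈ limClosure2 (toLoc k (X 0 + X 2)) (toLoc k (X 1 + X 3)) ↔
        r ∈ IsLocalRing.maximalIdeal (Localization.AtPrime (mQ k))) ∧
    -- injectivity: `(y)^lim : ab ⊆ (x)^lim`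
    (∀ r : Localization.AtPrime (mQ k),
      toLoc k (X 0 * X 1) * r ∈ limClosure2 (toLoc k (X 0 ^ 2)) (toLoc k (X 1 ^ 2)) →
        r ∈ limClosure2 (toLoc k (X 0 + X 2)) (toLoc k (X 1 + X 3))) := by
  simp only [toLoc_eq_locMap]
  refine ⟨Set.ext_iff.1 limClosure2_locMap_sq, radical_span_locMap_sq_ne_maximalIdeal,
    Set.ext_iff.1 limClosure2_locMap_add, fun r hr => ?_⟩
  rw [limClosure2_locMap_add]
  exact mem_maximalIdeal_of_locMap_mul_mem_limClosure2 hr
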